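/- Consider the planar system T' = T(1-T)[T·sinθ + (1-T)(1-cosθ)²], θ' = -T(3+cosθ) - (1-T)(1-cosθ)sinθ, describing the vacuum cosmology of f(R) = R + αR² gravity. Then: (i) for 0 < T < 1, the derivative of the function 𝔉(T,θ) = (1-T)(3+cosθ)/T along the flow equals -2(1-T)²(1-cosθ)²/T, which is ≤ 0; hence 𝔉 is monotonically non-increasing, and strictly decreasing except where cosθ = 1; (ii) the system has no equilibrium points with 0 < T ≤ 1 (at any equilibrium with 0 < T < 1 the identity would force cosθ = 1, whence θ' = -4T ≠ 0, and at T = 1 one has θ' = -(3+cosθ) < 0); (iii) the equilibria on T = 0 are exactly the points with θ ∈ πℤ, namely θ = 2nπ (the asymptotically de Sitter point O) and θ = (2n+1)π (the point A with deceleration parameter q = 1). -/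

import Mathlib

/-!
Everything rests on one trigonometric identity for the field: with `g` the bracket of `T18`, so
that `T18 = T (1 - T) g`, one has `sin θ · Th18 + (3 + cos θ) · g = 2 (1 - T) (1 - cos θ)²`.
Since `∇𝔉 = -((3 + cos θ) / T², (1 - T) sin θ / T)`, this gives the derivative of `𝔉` along the
flow. At an interior equilibrium `g = 0` and `Th18 = 0`, so it forces `cos θ = 1`, and then
`Th18 = -4T ≠ 0`. On `T = 0` the field reduces to `(0, -(1 - cos θ) sin θ)`.
-/

/-- `T`-component of the global `f(R) = R + αR²` vacuum cosmology vector field. -/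
noncomputable def T18 (T θ : ℝ) : ℝ :=
  T * (1 - T) * (T * Real.sin θ + (1 - T) * (1 - Real.cos θ) ^ 2)

/-- `θ`-component of the global `f(R) = R + αR²` vacuum cosmology vector field. -/
noncomputable def Th18 (T θ : ℝ) : ℝ :=
  -T * (3 + Real.cos θ) - (1 - T) * (1 - Real.cos θ) * Real.sin θ

open Real

lemma sin_mul_Th18_add (T θ : ℝ) :
    sin θ * Th18 T θ + (3 + cos θ) * (T * sin θ + (1 - T) * (1 - cos θ) ^ 2) =
      2 * (1 - T) * (1 - cos θ) ^ 2 := by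
  unfold Th18
  linear_combination -(1 - T) * (1 - cos θ) * sin_sq_add_cos_sq θ

lemma hasDerivAt_one_sub_mul_three_add_cos_div {Tf θf : ℝ → ℝ} {t : ℝ}
    (hT : HasDerivAt Tf (T18 (Tf t) (θf t)) t) (hθ : HasDerivAt θf (Th18 (Tf t) (θf t)) t)
    (hT0 : Tf t ≠ 0) :
    HasDerivAt (fun s => (1 - Tf s) * (3 + cos (θf s)) / Tf s)
      (-2 * (1 - Tf t) ^ 2 * (1 - cos (θf t)) ^ 2 / Tf t) t := by
  refine ((((hasDerivAt_const t 1).sub hT).mul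
    ((hasDerivAt_const t 3).add ((hasDerivAt_cos _).comp t hθ))).div hT hT0).congr_deriv ?_
  simp only [Pi.sub_apply, Pi.mul_apply, Pi.add_apply, Function.comp_apply]
  rw [div_eq_div_iff (pow_ne_zero 2 hT0) hT0]
  unfold T18
  linear_combination (-(Tf t ^ 2 * (1 - Tf t))) * sin_mul_Th18_add (Tf t) (θf t)

lemma neg_two_mul_sq_mul_sq_div_nonpos {T : ℝ} (c : ℝ) (hT : 0 ≤ T) :
    -2 * (1 - T) ^ 2 * (1 - c) ^ 2 / T ≤ 0 :=
  div_nonpos_of_nonpos_of_nonneg (by nlinarith [sq_nonneg ((1 - T) * (1 - c))]) hT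

lemma neg_two_mul_sq_mul_sq_div_neg {T c : ℝ} (hT : 0 < T) (hT1 : T < 1) (hc : c ≠ 1) :
    -2 * (1 - T) ^ 2 * (1 - c) ^ 2 / T < 0 := by
  have h1T : 1 - T ≠ 0 := sub_ne_zero.mpr hT1.ne'
  have h1c : 1 - c ≠ 0 := sub_ne_zero.mpr hc.symm
  exact div_neg_of_neg_of_pos (by nlinarith [sq_pos_of_ne_zero (mul_ne_zero h1T h1c)]) hT

lemma Th18_one_neg (θ : ℝ) : Th18 1 θ < 0 := by
  unfold Th18
  nlinarith [neg_one_le_cos θ]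

lemma cos_eq_one_of_isEquilibrium {T θ : ℝ} (hT0 : 0 < T) (hT1 : T < 1)
    (h : T18 T θ = 0) (h' : Th18 T θ = 0) : cos θ = 1 := by
  have hg : T * sin θ + (1 - T) * (1 - cos θ) ^ 2 = 0 := by
    simpa [T18, hT0.ne', sub_ne_zero.mpr hT1.ne'] using h
  have key := sin_mul_Th18_add T θ
  rw [h', hg] at key
  have : (1 - cos θ) ^ 2 = 0 := by
    simpa [sub_ne_zero.mpr hT1.ne'] using key.symm
  linarith [pow_eq_zero_iff two_ne_zero |>.mp this]

lemma not_isEquilibrium_of_pos {T θ : ℝ} (hT0 : 0 < T) (hT1 : T ≤ 1) :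
    ¬(T18 T θ = 0 ∧ Th18 T θ = 0) := by
  rintro ⟨h, h'⟩
  rcases hT1.eq_or_lt with rfl | hT1
  · exact (Th18_one_neg θ).ne h'
  · have hc := cos_eq_one_of_isEquilibrium hT0 hT1 h h'
    have hs : sin θ = 0 := by nlinarith [sin_sq_add_cos_sq θ]
    rw [Th18, hc, hs] at h'
    linarith

lemma Th18_zero_eq_zero_iff (θ : ℝ) : Th18 0 θ = 0 ↔ sin θ = 0 := by
  have hθ : Th18 0 θ = -((1 - cos θ) * sin θ) := by unfold Th18; ring
  rw [hθ, neg_eq_zero, mul_eq_zero, or_iff_right_iff_imp, sub_eq_zero]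
  intro hc
  nlinarith [sin_sq_add_cos_sq θ]

/-- Global dynamics of `f(R) = R + αR²` vacuum cosmology: (i) along the flow, for
`0 < T < 1`, the monotone function `𝔉 = (1-T)(3+cos θ)/T` has derivative
`-2(1-T)²(1-cos θ)²/T ≤ 0`, strictly negative unless `cos θ = 1`; (ii) there are no
equilibria with `0 < T ≤ 1`; (iii) the equilibria on `T = 0` are exactly `θ ∈ πℤ`. -/
theorem starobinsky_global_dynamics :
    (∀ (Tf θf : ℝ → ℝ) (t : ℝ),
      HasDerivAt Tf (T18 (Tf t) (θf t)) t →
      HasDerivAt θf (Th18 (Tf t) (θf t)) t →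
      0 < Tf t → Tf t < 1 →
      HasDerivAt (fun s => (1 - Tf s) * (3 + Real.cos (θf s)) / Tf s)
          (-2 * (1 - Tf t) ^ 2 * (1 - Real.cos (θf t)) ^ 2 / Tf t) t ∧
        -2 * (1 - Tf t) ^ 2 * (1 - Real.cos (θf t)) ^ 2 / Tf t ≤ 0 ∧
        (Real.cos (θf t) ≠ 1 →
          -2 * (1 - Tf t) ^ 2 * (1 - Real.cos (θf t)) ^ 2 / Tf t < 0)) ∧
    (∀ T θ : ℝ, 0 < T → T ≤ 1 → ¬(T18 T θ = 0 ∧ Th18 T θ = 0)) ∧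
    (∀ θ : ℝ, (T18 0 θ = 0 ∧ Th18 0 θ = 0) ↔ ∃ n : ℤ, θ = (n : ℝ) * Real.pi) := by
  refine ⟨fun Tf θf t hT hθ hT0 hT1 => ⟨hasDerivAt_one_sub_mul_three_add_cos_div hT hθ hT0.ne',
    neg_two_mul_sq_mul_sq_div_nonpos _ hT0.le, neg_two_mul_sq_mul_sq_div_neg hT0 hT1⟩,
    fun _ _ => not_isEquilibrium_of_pos, fun θ => ?_⟩
  have hT18 : T18 0 θ = 0 := by simp [T18]
  rw [hT18, Th18_zero_eq_zero_iff, sin_eq_zero_iff]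
  simp only [true_and, eq_comm]
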